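/- arXiv:1402.6199 — 2 statements merged into one kernel-verified Lean document; each statement's English description precedes it below -/
import Mathlib

section
/- The operator H_{φ,ψ}^α is symmetric with respect to the inner product ⟨f,g⟩_S := ⟨S_ψ f, g⟩: for all f, g ∈ D(H_{φ,ψ}^α), ⟨S_ψ H_{φ,ψ}^α f, g⟩ = ⟨S_ψ f, H_{φ,ψ}^α g⟩, provided the sequence α is real. -/
/-! Since `ψₙ = (T⁻¹)* eₙ` and `φₙ = T eₙ` are biorthogonal, the `ψₙ`-coefficients of
`H f = ∑ αₙ ⟨ψₙ, f⟩ φₙ` are `αₙ ⟨ψₙ, f⟩`. Expanding `S_ψ` then turns both sides into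
`∑ αₙ ⟨ψₙ, f⟩ ⟨g, ψₙ⟩`, where the reality of `αₙ` is what lets it pass through the conjugation. -/

noncomputable section

open ContinuousLinearMap

local notation "⟪" x ", " y "⟫" => @inner ℂ _ _ x y

section Biorthogonal

variable {𝕜 E F ι : Type*} [RCLike 𝕜] [NormedAddCommGroup E] [InnerProductSpace 𝕜 E]
  [NormedAddCommGroup F] [InnerProductSpace 𝕜 F]

variable (𝕜) in
def Biorthogonal [DecidableEq ι] (ψ φ : ι → E) : Prop :=
  ∀ i j, inner 𝕜 (ψ i) (φ j) = if i = j then 1 else 0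

theorem HasSum.inner_smul_right {c : ι → 𝕜} {v : ι → E} {x : E}
    (h : HasSum (fun i => c i • v i) x) (y : E) :
    HasSum (fun i => c i * inner 𝕜 y (v i)) (inner 𝕜 y x) := by
  simpa only [innerSL_apply_apply, _root_.inner_smul_right] using h.mapL (innerSL 𝕜 y)

theorem Biorthogonal.inner_eq_of_hasSum [DecidableEq ι] {ψ φ : ι → E}
    (hb : Biorthogonal 𝕜 ψ φ) {c : ι → 𝕜} {x : E} (h : HasSum (fun j => c j • φ j) x) (i : ι) :
    inner 𝕜 (ψ i) x = c i := by
  refine (h.inner_smul_right (ψ i)).unique ((hasSum_ite_eq i (c i)).congr_fun fun j => ?_)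
  rcases eq_or_ne i j with rfl | hij
  · simp [hb i i]
  · simp [hb i j, hij, hij.symm]

theorem inner_adjoint_symm_apply_apply [CompleteSpace E] [CompleteSpace F] (T : E ≃L[𝕜] F)
    (x y : E) : inner 𝕜 (adjoint (T.symm : F →L[𝕜] E) x) (T y) = inner 𝕜 x y := by
  rw [adjoint_inner_left, ContinuousLinearEquiv.coe_coe, T.symm_apply_apply]

theorem Orthonormal.biorthogonal_adjoint_symm [CompleteSpace E] [CompleteSpace F]
    [DecidableEq ι] {e : ι → E} (he : Orthonormal 𝕜 e) (T : E ≃L[𝕜] F) :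
    Biorthogonal 𝕜 (fun i => adjoint (T.symm : F →L[𝕜] E) (e i)) (fun i => T (e i)) :=
  fun i j => by rw [inner_adjoint_symm_apply_apply, orthonormal_iff_ite.mp he]

end Biorthogonal

theorem quasi_hermitian_symmetry
    {H : Type*} [NormedAddCommGroup H] [InnerProductSpace ℂ H] [CompleteSpace H]
    (e : HilbertBasis ℕ ℂ H) (T : H ≃L[ℂ] H) (φ ψ : ℕ → H)
    (hφ : ∀ n, φ n = T (e n))
    (hψ : ∀ n, ψ n = adjoint (T.symm : H →L[ℂ] H) (e n)) (α : ℕ → ℝ)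
    (Sψ : H →L[ℂ] H) (hSψ : ∀ f, HasSum (fun n => ⟪ψ n, f⟫ • ψ n) (Sψ f)) :
    ∀ f g Hf Hg : H,
      HasSum (fun n => ((α n : ℂ) * ⟪ψ n, f⟫) • φ n) Hf →
      HasSum (fun n => ((α n : ℂ) * ⟪ψ n, g⟫) • φ n) Hg →
      ⟪g, Sψ Hf⟫ = ⟪Hg, Sψ f⟫ := by
  intro f g Hf Hg hf hg
  have hb : Biorthogonal ℂ ψ φ := by
    simpa only [← funext hφ, ← funext hψ] using e.orthonormal.biorthogonal_adjoint_symm T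
  refine ((hSψ Hf).inner_smul_right g).unique
    (((hSψ f).inner_smul_right Hg).congr_fun fun n => ?_)
  rw [hb.inner_eq_of_hasSum hf, ← inner_conj_symm Hg, hb.inner_eq_of_hasSum hg, map_mul,
    Complex.conj_ofReal, inner_conj_symm]
  ring
end
end

section
/- If the sequence α = {α_n} is real, then the operator 𝗁_{φ,ψ}^α = S_ψ^{1/2} H_{φ,ψ}^α S_φ^{1/2} is self-adjoint on the Hilbert space H. -/
/-! Since `Sψ^{1/2}` is the inverse of `Sφ^{1/2}` (uniqueness of positive square roots),
`W = T⁻¹ Sφ^{1/2}` is unitary with `W⁻¹ = Sψ^{1/2} T`, so `𝗁 = Sψ^{1/2} T M T⁻¹ Sφ^{1/2} = W⁻¹ M W`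
where `M x = ∑ αₙ ⟪eₙ, x⟫ eₙ` is diagonal. A diagonal operator with real coefficients is
self-adjoint, and self-adjointness survives unitary conjugation. -/

noncomputable section

open ContinuousLinearMap

local notation "⟪" x ", " y "⟫" => @inner ℂ _ _ x y

open scoped InnerProductSpace

section Graph

variable {𝕜 E : Type*} [RCLike 𝕜] [NormedAddCommGroup E] [InnerProductSpace 𝕜 E]

variable (𝕜) in
/-- An unbounded operator is encoded by its graph `R` (`R x y`: `x` is in the domain and `y` is its
image); this is the graph of its adjoint. -/
def graphAdjoint (R : E → E → Prop) (x y : E) : Prop :=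
  ∀ u v, R u v → ⟪x, v⟫_𝕜 = ⟪y, u⟫_𝕜

theorem graphAdjoint_comp_linearIsometryEquiv (U : E ≃ₗᵢ[𝕜] E) (R : E → E → Prop) (x y : E) :
    graphAdjoint 𝕜 (fun u v => R (U u) (U v)) x y ↔ graphAdjoint 𝕜 R (U x) (U y) := by
  refine ⟨fun h u v huv => ?_, fun h u v huv => ?_⟩
  · have := h (U.symm u) (U.symm v) (by simpa only [U.apply_symm_apply] using huv)
    rwa [← U.inner_map_map, ← U.inner_map_map y, U.apply_symm_apply, U.apply_symm_apply] at this
  · simpa only [U.inner_map_map] using h _ _ huv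

end Graph

section Diagonal

variable {ι 𝕜 E : Type*} [RCLike 𝕜] [NormedAddCommGroup E] [InnerProductSpace 𝕜 E]

theorem HilbertBasis.hasSum_smul_iff (b : HilbertBasis ι 𝕜 E) (c : ι → 𝕜) (y : E) :
    HasSum (fun i => c i • b i) y ↔ ∀ i, c i = ⟪b i, y⟫_𝕜 := by
  classical
  refine ⟨fun h i => ?_, fun h => ?_⟩
  · have := (innerSL 𝕜 (b i)).hasSum h
    simp only [innerSL_apply_apply, inner_smul_right, orthonormal_iff_ite.mp b.orthonormal,
      mul_ite, mul_one, mul_zero] at this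
    simpa using (hasSum_single i fun j hj => if_neg (Ne.symm hj)).unique this
  · simpa only [h, b.repr_apply_apply] using b.hasSum_repr y

def HilbertBasis.diagonalGraph (b : HilbertBasis ι 𝕜 E) (α : ι → ℝ) (x y : E) : Prop :=
  HasSum (fun i => ((α i : 𝕜) * ⟪b i, x⟫_𝕜) • b i) y

theorem HilbertBasis.diagonalGraph_iff (b : HilbertBasis ι 𝕜 E) (α : ι → ℝ) (x y : E) :
    b.diagonalGraph α x y ↔ ∀ i, (α i : 𝕜) * ⟪b i, x⟫_𝕜 = ⟪b i, y⟫_𝕜 :=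
  b.hasSum_smul_iff _ y

theorem HilbertBasis.diagonalGraph_self (b : HilbertBasis ι 𝕜 E) (α : ι → ℝ) (i : ι) :
    b.diagonalGraph α (b i) ((α i : 𝕜) • b i) := by
  classical
  rw [b.diagonalGraph_iff]
  intro j
  simp only [inner_smul_right, orthonormal_iff_ite.mp b.orthonormal]
  split_ifs with hji
  · rw [hji]
  · simp

theorem HilbertBasis.graphAdjoint_diagonalGraph (b : HilbertBasis ι 𝕜 E) (α : ι → ℝ) (x y : E) :
    graphAdjoint 𝕜 (b.diagonalGraph α) x y ↔ b.diagonalGraph α x y := by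
  refine ⟨fun h => ?_, fun hxy u v huv => ?_⟩
  · rw [b.diagonalGraph_iff]
    intro i
    have := h _ _ (b.diagonalGraph_self α i)
    rw [inner_smul_right] at this
    rw [← inner_conj_symm (b i) x, ← inner_conj_symm (b i) y, ← this, map_mul, RCLike.conj_ofReal]
  · rw [b.diagonalGraph_iff] at hxy huv
    calc ⟪x, v⟫_𝕜 = ∑' i, ⟪x, b i⟫_𝕜 * ⟪b i, v⟫_𝕜 := (b.tsum_inner_mul_inner x v).symm
      _ = ∑' i, ⟪y, b i⟫_𝕜 * ⟪b i, u⟫_𝕜 := by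
        congr 1 with i
        rw [← huv, ← inner_conj_symm y, ← hxy, ← inner_conj_symm x]
        simp only [map_mul, RCLike.conj_ofReal]
        ring
      _ = ⟪y, u⟫_𝕜 := b.tsum_inner_mul_inner y u

theorem HilbertBasis.hasSum_smul_map_iff_diagonalGraph [CompleteSpace E]
    (b : HilbertBasis ι 𝕜 E) (T : E ≃L[𝕜] E) (α : ι → ℝ) (x k : E) :
    HasSum (fun i => ((α i : 𝕜) * ⟪adjoint (T.symm : E →L[𝕜] E) (b i), x⟫_𝕜) • T (b i)) k ↔
      b.diagonalGraph α (T.symm x) (T.symm k) := by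
  simp only [adjoint_inner_left, ← map_smul, T.hasSum]
  rfl

theorem HilbertBasis.exists_hasSum_and_eq_iff_diagonalGraph [CompleteSpace E]
    (b : HilbertBasis ι 𝕜 E) (T : E ≃L[𝕜] E) (α : ι → ℝ) {A B : E →L[𝕜] E} {W : E ≃ₗᵢ[𝕜] E}
    (hW : ∀ x, W x = T.symm (A x)) (hWsymm : ∀ y, W.symm y = B (T y)) (f w : E) :
    (∃ k, HasSum (fun i => ((α i : 𝕜) * ⟪adjoint (T.symm : E →L[𝕜] E) (b i), A f⟫_𝕜) • T (b i)) k ∧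
      B k = w) ↔ b.diagonalGraph α (W f) (W w) := by
  simp only [b.hasSum_smul_map_iff_diagonalGraph, ← hW]
  constructor
  · rintro ⟨k, hk, rfl⟩
    have hWk : W (B k) = T.symm k := by
      rw [← T.apply_symm_apply k, ← hWsymm, W.apply_symm_apply, T.apply_symm_apply]
    exact hWk ▸ hk
  · intro hw
    refine ⟨T (W w), ?_, ?_⟩
    · rwa [T.symm_apply_apply]
    · rw [← hWsymm, W.symm_apply_apply]

end Diagonal

theorem mul_eq_one_of_mul_self_mul_mul_self_eq_one {A : Type*} [CStarAlgebra A] [PartialOrder A]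
    [StarOrderedRing A] {a b : A} (ha : 0 ≤ a) (hb : 0 ≤ b) (hab : a * a * (b * b) = 1)
    (hba : b * b * (a * a) = 1) : a * b = 1 ∧ b * a = 1 := by
  obtain ⟨u, rfl⟩ : IsUnit a := (isUnit_pow_iff two_ne_zero).mp (pow_two a ▸ ⟨⟨_, _, hab, hba⟩, rfl⟩)
  have hu : (↑u⁻¹ : A) * ↑u⁻¹ = b * b :=
    calc (↑u⁻¹ : A) * ↑u⁻¹ = ↑u⁻¹ * ↑u⁻¹ * (u * u * (b * b)) := by rw [hab, mul_one]
      _ = b * b := by simp only [← mul_assoc, Units.inv_mul_cancel_right, Units.inv_mul, one_mul]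
  have : (↑u⁻¹ : A) = b :=
    (CFC.sqrt_unique hu (CFC.inv_nonneg_of_nonneg u ha)).symm.trans (CFC.sqrt_unique rfl hb)
  simp [← this]

theorem ContinuousLinearEquiv.exists_linearIsometryEquiv_of_mul_self_eq
    {H : Type*} [NormedAddCommGroup H] [InnerProductSpace ℂ H] [CompleteSpace H]
    (T : H ≃L[ℂ] H) {A B : H →L[ℂ] H} (hA : A.IsPositive) (hB : B.IsPositive)
    (hA2 : A * A = T * adjoint (T : H →L[ℂ] H))
    (hB2 : B * B = adjoint (T.symm : H →L[ℂ] H) * T.symm) :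
    ∃ W : H ≃ₗᵢ[ℂ] H, (∀ x, W x = T.symm (A x)) ∧ ∀ y, W.symm y = B (T y) := by
  rw [← star_eq_adjoint] at hA2
  rw [← star_eq_adjoint] at hB2
  have hTTsymm : (T : H →L[ℂ] H) * T.symm = 1 := T.toUnit.mul_inv
  have hTsymmT : (T.symm : H →L[ℂ] H) * T = 1 := T.toUnit.inv_mul
  obtain ⟨hAB, hBA⟩ : A * B = 1 ∧ B * A = 1 := by
    refine mul_eq_one_of_mul_self_mul_mul_self_eq_one ((nonneg_iff_isPositive A).2 hA)
      ((nonneg_iff_isPositive B).2 hB) ?_ ?_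
    · rw [hA2, hB2, mul_assoc, ← mul_assoc (star _), ← star_mul, hTsymmT, star_one, one_mul, hTTsymm]
    · rw [hA2, hB2, mul_assoc, ← mul_assoc (T.symm : H →L[ℂ] H), hTsymmT, one_mul, ← star_mul, hTTsymm,
        star_one]
  have hstar : star ((T.symm : H →L[ℂ] H) * A) = B * T :=
    calc star ((T.symm : H →L[ℂ] H) * A) = A * star (T.symm : H →L[ℂ] H) := by
          rw [star_mul, hA.isSelfAdjoint.star_eq]
      _ = B * (A * A) * star (T.symm : H →L[ℂ] H) := by rw [← mul_assoc, hBA, one_mul]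
      _ = B * T := by rw [hA2, mul_assoc, mul_assoc, ← star_mul, hTsymmT, star_one, mul_one]
  have hW : (T.symm : H →L[ℂ] H) * A ∈ unitary (H →L[ℂ] H) := by
    rw [Unitary.mem_iff, hstar]
    constructor
    · rw [mul_assoc, ← mul_assoc (T : H →L[ℂ] H), hTTsymm, one_mul, hBA]
    · rw [mul_assoc, ← mul_assoc A, hAB, one_mul, hTsymmT]
  exact ⟨Unitary.linearIsometryEquiv ⟨_, hW⟩, fun _ => rfl, DFunLike.congr_fun hstar⟩

theorem h_selfadjoint_for_real_alpha
    {H : Type*} [NormedAddCommGroup H] [InnerProductSpace ℂ H] [CompleteSpace H]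
    (e : HilbertBasis ℕ ℂ H) (T : H ≃L[ℂ] H) (φ ψ : ℕ → H)
    (hφ : ∀ n, φ n = T (e n))
    (hψ : ∀ n, ψ n = adjoint (T.symm : H →L[ℂ] H) (e n)) (α : ℕ → ℝ)
    (Sφhalf Sψhalf : H →L[ℂ] H)
    (hSφhalf : Sφhalf.IsPositive)
    (hSψhalf : Sψhalf.IsPositive)
    (hSφsq : Sφhalf * Sφhalf = (T : H →L[ℂ] H) * adjoint (T : H →L[ℂ] H))
    (hSψsq : Sψhalf * Sψhalf = adjoint (T.symm : H →L[ℂ] H) * (T.symm : H →L[ℂ] H)) :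
    ∀ g h : H,
      (∀ f k : H, HasSum (fun n => ((α n : ℂ) * ⟪ψ n, Sφhalf f⟫) • φ n) k →
          ⟪g, Sψhalf k⟫ = ⟪h, f⟫) ↔
        ∃ k : H, HasSum (fun n => ((α n : ℂ) * ⟪ψ n, Sφhalf g⟫) • φ n) k ∧ Sψhalf k = h := by
  intro g h
  obtain ⟨W, hW, hWsymm⟩ := T.exists_linearIsometryEquiv_of_mul_self_eq hSφhalf hSψhalf hSφsq hSψsq
  have hgraph : ∀ f w, (∃ k, HasSum (fun n => ((α n : ℂ) * ⟪ψ n, Sφhalf f⟫) • φ n) k ∧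
      Sψhalf k = w) ↔ e.diagonalGraph α (W f) (W w) := by
    intro f w
    simp only [hφ, hψ]
    exact e.exists_hasSum_and_eq_iff_diagonalGraph T α hW hWsymm f w
  calc _ ↔ graphAdjoint ℂ (fun f w => ∃ k, HasSum (fun n => ((α n : ℂ) * ⟪ψ n, Sφhalf f⟫) • φ n) k ∧
        Sψhalf k = w) g h := by
        simp only [graphAdjoint, forall_exists_index, and_imp, forall_apply_eq_imp_iff₂]
    _ ↔ graphAdjoint ℂ (fun f w => e.diagonalGraph α (W f) (W w)) g h := by simp only [hgraph]
    _ ↔ e.diagonalGraph α (W g) (W h) :=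
      (graphAdjoint_comp_linearIsometryEquiv W _ g h).trans (e.graphAdjoint_diagonalGraph α _ _)
    _ ↔ _ := (hgraph g h).symm
end
end
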